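/- For each n ≥ 1 there are, up to isomorphism, exactly two graphs with loops on n vertices whose vertex degrees are all distinct; one is connected with degree sequence (1,2,…,n) and the other is disconnected with degree sequence (0,1,…,n−1), and they are complements of each other. -/
import Mathlib


/-- Degree of vertex `i` in a graph with loops given by a symmetric boolean
adjacency matrix. -/
def loopDegree {n : ℕ} (A : Fin n → Fin n → Bool) (i : Fin n) : ℕ :=
  (Finset.univ.filter fun j => A i j).card

/-- A graph with loops is connected if any two vertices are joined by a
(nonempty) walk; for a single vertex this requires a loop. -/
def LoopConnected {n : ℕ} (A : Fin n → Fin n → Bool) : Prop :=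
  ∀ i j : Fin n, Relation.TransGen (fun a b => A a b = true) i j

/-- Isomorphism of graphs with loops. -/
def LoopIso {n : ℕ} (A B : Fin n → Fin n → Bool) : Prop :=
  ∃ e : Equiv.Perm (Fin n), ∀ i j, A i j = B (e i) (e j)

open Finset

/-- The canonical connected anti-regular graph with loops. -/
def Gm (n : ℕ) : Fin n → Fin n → Bool := fun i j => decide (n ≤ (i : ℕ) + (j : ℕ) + 1)

lemma loopDegree_le {n : ℕ} (A : Fin n → Fin n → Bool) (i : Fin n) : loopDegree A i ≤ n := by
  have := Finset.card_filter_le (Finset.univ : Finset (Fin n)) (fun j => A i j = true)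
  simpa [loopDegree] using this

lemma loopDegree_Gm {n : ℕ} (i : Fin n) : loopDegree (Gm n) i = (i : ℕ) + 1 := by
  have hn : 0 < n := i.pos
  have h : (Finset.univ.filter fun j => Gm n i j = true) =
      Finset.Icc (⟨n - 1 - i, by omega⟩ : Fin n) ⟨n - 1, by omega⟩ := by
    ext j
    have := i.isLt
    have := j.isLt
    simp only [Finset.mem_filter, Finset.mem_univ, true_and, Gm, decide_eq_true_eq,
      Finset.mem_Icc, Fin.le_def]
    omega
  rw [loopDegree, h, Fin.card_Icc]
  have := i.isLt
  simp only []
  omega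

lemma loopDegree_compl {n : ℕ} (A : Fin n → Fin n → Bool) (i : Fin n) :
    loopDegree (fun a b => !A a b) i = n - loopDegree A i := by
  classical
  have h : (Finset.univ.filter fun j => (!A i j) = true) =
      Finset.univ \ (Finset.univ.filter fun j => A i j = true) := by
    ext j; simp
  rw [loopDegree, loopDegree, h, Finset.card_sdiff_of_subset (Finset.filter_subset _ _), Finset.card_univ,
    Fintype.card_fin]

lemma loopDegree_iso {n : ℕ} {A B : Fin n → Fin n → Bool} (e : Equiv.Perm (Fin n))
    (h : ∀ i j, A i j = B (e i) (e j)) (i : Fin n) :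
    loopDegree A i = loopDegree B (e i) := by
  classical
  rw [loopDegree, loopDegree]
  have h2 : (Finset.univ.filter fun j => B (e i) j = true) =
      (Finset.univ.filter fun j => B (e i) (e j) = true).image e := by
    conv_lhs => rw [show (Finset.univ : Finset (Fin n)) = Finset.univ.image e by
      simp [Finset.image_univ_equiv]]
    rw [Finset.filter_image]
  rw [h2, Finset.card_image_of_injective _ e.injective]
  congr 1
  ext j
  simp [h i j]

lemma iso_Gm {n : ℕ} (A : Fin n → Fin n → Bool) (hs : ∀ i j, A i j = A j i)
    (hinj : Function.Injective (loopDegree A))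
    (himg : Finset.image (loopDegree A) Finset.univ = Finset.Icc 1 n) :
    LoopIso A (Gm n) := by
  classical
  set D := loopDegree A with hDdef
  have hmem : ∀ u, 1 ≤ D u ∧ D u ≤ n := by
    intro u
    have : D u ∈ Finset.Icc 1 n := himg ▸ Finset.mem_image_of_mem _ (Finset.mem_univ u)
    simpa using this
  have hcard : ∀ m : ℕ, 1 ≤ m →
      (Finset.univ.filter fun v => m ≤ D v).card = n + 1 - m := by
    intro m hm
    have h1 : ((Finset.univ.image D).filter fun x => m ≤ x).card =
        (Finset.univ.filter fun v => m ≤ D v).card := by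
      rw [Finset.filter_image, Finset.card_image_of_injective _ hinj]
    rw [← h1, himg]
    have h2 : (Finset.Icc 1 n).filter (fun x => m ≤ x) = Finset.Icc m n := by
      ext x; simp only [Finset.mem_filter, Finset.mem_Icc]; omega
    rw [h2, Nat.card_Icc]
  have hdeg : ∀ u, (Finset.univ.filter fun v => A u v = true).card = D u := fun u => rfl
  have claim : ∀ k, 1 ≤ k → ∀ u v : Fin n,
      (D u = n + 1 - k → (A u v = true ↔ k ≤ D v)) ∧
      (D u = k → (A u v = true ↔ n + 1 - k ≤ D v)) := by
    intro k
    induction k using Nat.strong_induction_on with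
    | _ k IH =>
    intro hk u v
    by_cases hbig : n + 1 < 2 * k
    · by_cases hkn : k ≤ n
      · have hlt : n + 1 - k < k := by omega
        have hk' : 1 ≤ n + 1 - k := by omega
        constructor
        · intro hu
          have := (IH _ hlt hk' u v).2 (by omega)
          rw [this]
          omega
        · intro hu
          have := (IH _ hlt hk' u v).1 (by omega)
          rw [this]
      · constructor
        · intro hu; exact absurd hu (by have := (hmem u).1; omega)
        · intro hu; exact absurd hu (by have := (hmem u).2; omega)
    · push_neg at hbig
      have hTk : ∀ u v : Fin n, D u = n + 1 - k → (A u v = true ↔ k ≤ D v) := by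
        intro u v hu
        have hlow : ∀ w : Fin n, A u w = true → k ≤ D w := by
          intro w hw
          by_contra hcon
          push_neg at hcon
          have h1 := (hmem w).1
          have h2 := (hmem u).2
          have h3 := ((IH (D w) (by omega) (by omega) w u).2 rfl).mp
            (by rw [hs w u]; exact hw)
          omega
        have hsub : (Finset.univ.filter fun w => A u w = true) ⊆
            (Finset.univ.filter fun w => k ≤ D w) := by
          intro w hw
          simp only [Finset.mem_filter, Finset.mem_univ, true_and] at *
          exact hlow w hw
        have hEq := Finset.eq_of_subset_of_card_le hsub
          (by rw [hcard k hk, hdeg, hu])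
        constructor
        · exact hlow v
        · intro h
          have hv : v ∈ (Finset.univ.filter fun w => A u w = true) := by
            rw [hEq]
            simp only [Finset.mem_filter, Finset.mem_univ, true_and]
            exact h
          simpa using hv
      refine ⟨fun hu => hTk u v hu, ?_⟩
      intro hu
      have hhigh : ∀ w : Fin n, n + 1 - k ≤ D w → A u w = true := by
        intro w hw
        have hw2 := (hmem w).2
        rcases Nat.lt_or_ge (n + 1 - k) (D w) with h | h
        · have hj1 : 1 ≤ n + 1 - D w := by omega
          have hjk : n + 1 - D w < k := by omega
          have := ((IH _ hjk hj1 w u).1 (by omega)).mpr (by omega)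
          rw [hs u w]; exact this
        · have hDw : D w = n + 1 - k := by omega
          have := (hTk w u hDw).mpr (by omega)
          rw [hs u w]; exact this
      have hsub : (Finset.univ.filter fun w => n + 1 - k ≤ D w) ⊆
          (Finset.univ.filter fun w => A u w = true) := by
        intro w hw
        simp only [Finset.mem_filter, Finset.mem_univ, true_and] at *
        exact hhigh w hw
      have hEq := Finset.eq_of_subset_of_card_le hsub
        (by rw [hdeg, hu, hcard (n + 1 - k) (by omega)]; omega)
      constructor
      · intro h
        have hv : v ∈ (Finset.univ.filter fun w => n + 1 - k ≤ D w) := by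
          rw [hEq]
          simp only [Finset.mem_filter, Finset.mem_univ, true_and]
          exact h
        simpa using hv
      · exact hhigh v
  have hiff : ∀ u v, A u v = true ↔ n + 1 ≤ D u + D v := by
    intro u v
    have h1 := (hmem u).1
    have h2 := (hmem u).2
    rw [(claim (D u) h1 u v).2 rfl]
    omega
  have hepos : ∀ i, D i - 1 < n := fun i => by have := hmem i; omega
  have hfinj : Function.Injective (fun i => (⟨D i - 1, hepos i⟩ : Fin n)) := by
    intro a b hab
    apply hinj
    have h1 := (hmem a).1
    have h2 := (hmem b).1
    have h3 : D a - 1 = D b - 1 := congrArg Fin.val hab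
    omega
  refine ⟨Equiv.ofBijective _ (Finite.injective_iff_bijective.mp hfinj), ?_⟩
  intro i j
  have hG : (Gm n (⟨D i - 1, hepos i⟩ : Fin n) (⟨D j - 1, hepos j⟩ : Fin n) = true) ↔
      n + 1 ≤ D i + D j := by
    have h1 := (hmem i).1
    have h2 := (hmem j).1
    simp only [Gm, decide_eq_true_eq]
    omega
  have := (hiff i j).trans hG.symm
  exact Bool.eq_iff_iff.mpr this

lemma iso_of_top {n : ℕ} (A : Fin n → Fin n → Bool) (hs : ∀ i j, A i j = A j i)
    (hinj : Function.Injective (loopDegree A)) (htop : ∃ u, loopDegree A u = n) :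
    LoopIso A (Gm n) := by
  classical
  obtain ⟨u, hu⟩ := htop
  have huall : ∀ v, A u v = true := by
    intro v
    have hcf : (Finset.univ : Finset (Fin n)).card ≤
        (Finset.univ.filter fun j => A u j = true).card := by
      have : (Finset.univ.filter fun j => A u j = true).card = n := hu
      rw [this, Finset.card_univ, Fintype.card_fin]
    have h := Finset.eq_of_subset_of_card_le (Finset.filter_subset _ _) hcf
    have hv : v ∈ (Finset.univ.filter fun j => A u j = true) := by
      rw [h]; exact Finset.mem_univ v
    simpa using hv
  have hpos : ∀ v, 1 ≤ loopDegree A v := by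
    intro v
    have hv : u ∈ (Finset.univ.filter fun j => A v j = true) := by
      simp only [Finset.mem_filter, Finset.mem_univ, true_and]
      rw [hs v u]; exact huall v
    exact Finset.card_pos.mpr ⟨u, hv⟩
  have himg : Finset.image (loopDegree A) Finset.univ = Finset.Icc 1 n := by
    apply Finset.eq_of_subset_of_card_le
    · intro m hm
      simp only [Finset.mem_image, Finset.mem_univ, true_and] at hm
      obtain ⟨v, rfl⟩ := hm
      simp only [Finset.mem_Icc]
      exact ⟨hpos v, loopDegree_le A v⟩
    · rw [Nat.card_Icc, Finset.card_image_of_injective _ hinj, Finset.card_univ,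
        Fintype.card_fin]
      omega
  exact iso_Gm A hs hinj himg

/-- For each `n ≥ 1` there are, up to isomorphism, exactly two graphs with loops
on `n` vertices all of whose degrees are distinct: a connected one `G` with
degree sequence `(1,2,…,n)` and a disconnected one `H` with degree sequence
`(0,1,…,n-1)`, and they are complements of each other. -/
theorem antiRegular_classification (n : ℕ) (hn : 1 ≤ n) :
    ∃ G H : Fin n → Fin n → Bool,
      (∀ i j, G i j = G j i) ∧ (∀ i j, H i j = H j i) ∧
      Function.Injective (loopDegree G) ∧ Function.Injective (loopDegree H) ∧
      LoopConnected G ∧ ¬ LoopConnected H ∧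
      Finset.image (loopDegree G) Finset.univ = Finset.Icc 1 n ∧
      Finset.image (loopDegree H) Finset.univ = Finset.Icc 0 (n - 1) ∧
      (∀ i j, H i j = ! G i j) ∧
      ¬ LoopIso G H ∧
      (∀ A : Fin n → Fin n → Bool, (∀ i j, A i j = A j i) →
        Function.Injective (loopDegree A) → LoopIso A G ∨ LoopIso A H) := by
  classical
  refine ⟨Gm n, fun i j => ! Gm n i j, ?_, ?_, ?_, ?_, ?_, ?_, ?_, ?_, fun _ _ => rfl, ?_, ?_⟩
  · intro i j
    simp only [Gm, decide_eq_decide]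
    omega
  · intro i j
    have h : Gm n i j = Gm n j i := by
      simp only [Gm, decide_eq_decide]
      omega
    simp only [h]
  · intro a b hab
    rw [loopDegree_Gm, loopDegree_Gm] at hab
    exact Fin.ext (by omega)
  · intro a b hab
    rw [loopDegree_compl, loopDegree_compl, loopDegree_Gm, loopDegree_Gm] at hab
    have := a.isLt
    have := b.isLt
    exact Fin.ext (by omega)
  · intro i j
    have e1 : Gm n i ⟨n - 1, by omega⟩ = true := by
      simp only [Gm, decide_eq_true_eq]
      omega
    have e2 : Gm n (⟨n - 1, by omega⟩ : Fin n) j = true := by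
      simp only [Gm, decide_eq_true_eq]
      omega
    exact Relation.TransGen.head e1 (Relation.TransGen.single e2)
  · intro h
    have h2 := h ⟨n - 1, by omega⟩ ⟨n - 1, by omega⟩
    rw [Relation.TransGen.head'_iff] at h2
    obtain ⟨a, ha, -⟩ := h2
    have ha' : (!Gm n (⟨n - 1, by omega⟩ : Fin n) a) = true := ha
    have hg : Gm n (⟨n - 1, by omega⟩ : Fin n) a = true := by
      simp only [Gm, decide_eq_true_eq]
      omega
    rw [hg] at ha'
    exact absurd ha' (by simp)
  · ext m
    simp only [Finset.mem_image, Finset.mem_univ, true_and, Finset.mem_Icc, loopDegree_Gm]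
    constructor
    · rintro ⟨i, rfl⟩
      have := i.isLt
      omega
    · intro hm
      exact ⟨⟨m - 1, by omega⟩, by simp; omega⟩
  · ext m
    simp only [Finset.mem_image, Finset.mem_univ, true_and, Finset.mem_Icc,
      loopDegree_compl, loopDegree_Gm]
    constructor
    · rintro ⟨i, rfl⟩
      have := i.isLt
      omega
    · intro hm
      exact ⟨⟨n - 1 - m, by omega⟩, by simp; omega⟩
  · rintro ⟨e, he⟩
    have h1 := loopDegree_iso (A := Gm n) (B := fun i j => !Gm n i j) e he ⟨n - 1, by omega⟩
    rw [loopDegree_Gm, loopDegree_compl, loopDegree_Gm] at h1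
    have := (e ⟨n - 1, by omega⟩).isLt
    simp only [] at h1
    omega
  · intro A hsA hinjA
    by_cases htop : ∃ u, loopDegree A u = n
    · exact Or.inl (iso_of_top A hsA hinjA htop)
    · right
      push_neg at htop
      have hle : ∀ u, loopDegree A u ≤ n - 1 := by
        intro u
        have h1 := loopDegree_le A u
        have h2 := htop u
        omega
      have hs' : ∀ i j, (!A i j) = (!A j i) := fun i j => by rw [hsA i j]
      have hD' : ∀ u, loopDegree (fun a b => !A a b) u = n - loopDegree A u :=
        loopDegree_compl A
      have hinj' : Function.Injective (loopDegree (fun a b => !A a b)) := by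
        intro a b hab
        apply hinjA
        rw [hD', hD'] at hab
        have := hle a
        have := hle b
        omega
      have h0 : ∃ u, loopDegree A u = 0 := by
        have himg : Finset.image (loopDegree A) Finset.univ = Finset.Icc 0 (n - 1) := by
          apply Finset.eq_of_subset_of_card_le
          · intro m hm
            simp only [Finset.mem_image, Finset.mem_univ, true_and] at hm
            obtain ⟨v, rfl⟩ := hm
            simp only [Finset.mem_Icc]
            exact ⟨Nat.zero_le _, hle v⟩
          · rw [Nat.card_Icc, Finset.card_image_of_injective _ hinjA, Finset.card_univ,
              Fintype.card_fin]
            omega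
        have h2 : (0 : ℕ) ∈ Finset.image (loopDegree A) Finset.univ := by
          rw [himg]
          simp
        simpa using h2
      obtain ⟨u, hu⟩ := h0
      obtain ⟨e, he⟩ := iso_of_top (fun a b => !A a b) hs' hinj'
        ⟨u, by rw [hD', hu]; omega⟩
      refine ⟨e, fun i j => ?_⟩
      have h3 : (!A i j) = Gm n (e i) (e j) := he i j
      show A i j = !Gm n (e i) (e j)
      rw [← h3, Bool.not_not]
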